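/- For the Pauli-6 POVM and any Pauli matrix P, the sum Σ_a M_a · ⟨ψ_a| 3P |ψ_a⟩² = 3·I, where M_a = (1/3)|ψ_a⟩⟨ψ_a| ranges over the six Pauli eigenstates. Consequently, for a k-local tensor-product Pauli observable O = P₁⊗…⊗P_k⊗I^⊗(n−k), the single-shadow estimator has second moment at most 3^k for every n-qubit density matrix ρ. -/

import Mathlib

open Matrix Complex
open scoped ComplexOrder

noncomputable def ket0 : Fin 2 → ℂ := ![1, 0]
noncomputable def ket1 : Fin 2 → ℂ := ![0, 1]
noncomputable def ketP : Fin 2 → ℂ := ![(Real.sqrt 2)⁻¹, (Real.sqrt 2)⁻¹]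
noncomputable def ketM : Fin 2 → ℂ := ![(Real.sqrt 2)⁻¹, -(Real.sqrt 2)⁻¹]
noncomputable def ketL : Fin 2 → ℂ := ![(Real.sqrt 2)⁻¹, Complex.I * (Real.sqrt 2)⁻¹]
noncomputable def ketR : Fin 2 → ℂ := ![(Real.sqrt 2)⁻¹, -Complex.I * (Real.sqrt 2)⁻¹]

/-- The rank-one projector |ψ⟩⟨ψ|. -/
noncomputable def proj (ψ : Fin 2 → ℂ) : Matrix (Fin 2) (Fin 2) ℂ :=
  Matrix.vecMulVec ψ (star ψ)

noncomputable def sx : Matrix (Fin 2) (Fin 2) ℂ := !![0, 1; 1, 0]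
noncomputable def sy : Matrix (Fin 2) (Fin 2) ℂ := !![0, -Complex.I; Complex.I, 0]
noncomputable def sz : Matrix (Fin 2) (Fin 2) ℂ := !![1, 0; 0, -1]

/-- The six Pauli eigenstates. -/
noncomputable def ψ6 : Fin 6 → (Fin 2 → ℂ) := ![ket0, ket1, ketP, ketM, ketL, ketR]

/-- The Pauli-6 POVM elements. -/
noncomputable def M6 (a : Fin 6) : Matrix (Fin 2) (Fin 2) ℂ := (3 : ℂ)⁻¹ • proj (ψ6 a)

/-- The inverse of the Pauli-6 measurement channel: `M⁻¹(X) = 3X − tr(X)·I`. -/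
noncomputable def Minv (X : Matrix (Fin 2) (Fin 2) ℂ) : Matrix (Fin 2) (Fin 2) ℂ :=
  (3 : ℂ) • X - X.trace • 1

/-- The n-fold tensor product of single-qubit matrices, as a matrix indexed by
`Fin n → Fin 2`. -/
noncomputable def nfold {n : ℕ} (f : Fin n → Matrix (Fin 2) (Fin 2) ℂ) :
    Matrix (Fin n → Fin 2) (Fin n → Fin 2) ℂ :=
  Matrix.of fun i j => ∏ t, f t (i t) (j t)

/-! On one qubit, `⟨ψ_a|P|ψ_a⟩` is `±1` on the two eigenstates of a Pauli matrix `P` and `0` on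
the other four, so `∑_a M_a ⟨ψ_a|3P|ψ_a⟩² = 9 · (1/3) · (sum of the two eigenprojectors) = 3 I`.
Since `P` is traceless, `tr(P M⁻¹(|ψ_a⟩⟨ψ_a|)) = ⟨ψ_a|3P|ψ_a⟩`, while for `P = I` it equals `1`
and `∑_a M_a = I`. The outcome probabilities and the estimator both factorise over the tensor
product, so the second moment is `tr(ρ ⊗_i c_i I)` with `c_i = 3` on the first `k` qubits and
`c_i = 1` elsewhere: it equals `3^k` exactly. -/

lemma ofReal_sqrt_two_sq : ((Real.sqrt 2 : ℝ) : ℂ) ^ 2 = 2 := by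
  rw [← Complex.ofReal_pow, Real.sq_sqrt zero_le_two]
  norm_num

lemma proj_ket0 : proj ket0 = !![1, 0; 0, 0] := by
  ext i j; fin_cases i <;> fin_cases j <;> simp [proj, ket0, vecMulVec_apply]

lemma proj_ket1 : proj ket1 = !![0, 0; 0, 1] := by
  ext i j; fin_cases i <;> fin_cases j <;> simp [proj, ket1, vecMulVec_apply]

lemma proj_ketP : proj ketP = !![2⁻¹, 2⁻¹; 2⁻¹, 2⁻¹] := by
  ext i j; fin_cases i <;> fin_cases j <;>
    simp [proj, ketP, vecMulVec_apply] <;> field_simp <;> simp [ofReal_sqrt_two_sq]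

lemma proj_ketM : proj ketM = !![2⁻¹, -2⁻¹; -2⁻¹, 2⁻¹] := by
  ext i j; fin_cases i <;> fin_cases j <;>
    simp [proj, ketM, vecMulVec_apply] <;> field_simp <;> simp [ofReal_sqrt_two_sq]

lemma proj_ketL : proj ketL = !![2⁻¹, -(I / 2); I / 2, 2⁻¹] := by
  ext i j; fin_cases i <;> fin_cases j <;>
    simp [proj, ketL, vecMulVec_apply] <;> field_simp <;> simp [ofReal_sqrt_two_sq]

lemma proj_ketR : proj ketR = !![2⁻¹, I / 2; -(I / 2), 2⁻¹] := by
  ext i j; fin_cases i <;> fin_cases j <;>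
    simp [proj, ketR, vecMulVec_apply] <;> field_simp <;> simp [ofReal_sqrt_two_sq]

lemma dotProduct_mulVec_eq_trace_mul_proj (A : Matrix (Fin 2) (Fin 2) ℂ) (ψ : Fin 2 → ℂ) :
    star ψ ⬝ᵥ A *ᵥ ψ = (A * proj ψ).trace := by
  simp only [dotProduct, mulVec, Matrix.trace, Matrix.diag, Matrix.mul_apply, proj,
    vecMulVec_apply, Finset.mul_sum, Pi.star_apply]
  exact Finset.sum_congr rfl fun _ _ => Finset.sum_congr rfl fun _ _ => by ring

lemma sum_sq_expectation_smul_M6 {Q : Matrix (Fin 2) (Fin 2) ℂ}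
    (hQ : Q = sx ∨ Q = sy ∨ Q = sz) :
    ∑ a : Fin 6, (star (ψ6 a) ⬝ᵥ ((3 : ℂ) • Q) *ᵥ ψ6 a) ^ 2 • M6 a = (3 : ℂ) • 1 := by
  simp only [dotProduct_mulVec_eq_trace_mul_proj, Fin.sum_univ_six, M6, ψ6, Matrix.cons_val,
    proj_ket0, proj_ket1, proj_ketP, proj_ketM, proj_ketL, proj_ketR]
  rcases hQ with rfl | rfl | rfl <;>
    ext i j <;> fin_cases i <;> fin_cases j <;>
    simp [sx, sy, sz, Matrix.trace_fin_two] <;> ring_nf <;>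
    norm_num [Complex.I_sq]

lemma trace_mul_Minv (Q X : Matrix (Fin 2) (Fin 2) ℂ) :
    (Q * Minv X).trace = 3 * (Q * X).trace - X.trace * Q.trace := by
  simp [Minv, Matrix.mul_sub, Matrix.trace_sub, mul_comm]

lemma trace_proj_ψ6 (a : Fin 6) : (proj (ψ6 a)).trace = 1 := by
  fin_cases a <;>
    simp [ψ6, proj_ket0, proj_ket1, proj_ketP, proj_ketM, proj_ketL, proj_ketR,
      Matrix.trace_fin_two] <;> norm_num

lemma sum_M6 : ∑ a : Fin 6, M6 a = 1 := by
  simp only [Fin.sum_univ_six, M6, ψ6, Matrix.cons_val,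
    proj_ket0, proj_ket1, proj_ketP, proj_ketM, proj_ketL, proj_ketR]
  ext i j; fin_cases i <;> fin_cases j <;> simp <;> norm_num

lemma sum_sq_trace_mul_Minv_smul_M6_of_pauli {Q : Matrix (Fin 2) (Fin 2) ℂ}
    (hQ : Q = sx ∨ Q = sy ∨ Q = sz) :
    ∑ a : Fin 6, (Q * Minv (proj (ψ6 a))).trace ^ 2 • M6 a = (3 : ℂ) • 1 := by
  have htrace : Q.trace = 0 := by
    rcases hQ with rfl | rfl | rfl <;> simp [sx, sy, sz, Matrix.trace_fin_two]
  convert sum_sq_expectation_smul_M6 hQ using 4 with a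
  rw [dotProduct_mulVec_eq_trace_mul_proj, trace_mul_Minv, htrace, Matrix.smul_mul,
    Matrix.trace_smul, smul_eq_mul, mul_zero, sub_zero]

lemma sum_sq_trace_one_mul_Minv_smul_M6 :
    ∑ a : Fin 6, (1 * Minv (proj (ψ6 a))).trace ^ 2 • M6 a = 1 := by
  have htrace (a : Fin 6) : (1 * Minv (proj (ψ6 a))).trace = 1 := by
    rw [trace_mul_Minv, Matrix.one_mul, trace_proj_ψ6, Matrix.trace_one]
    norm_num
  simp only [htrace, one_pow, one_smul, sum_M6]

section nfold

variable {n : ℕ}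

lemma nfold_mul (f g : Fin n → Matrix (Fin 2) (Fin 2) ℂ) :
    nfold f * nfold g = nfold fun t => f t * g t := by
  ext i j
  simp only [Matrix.mul_apply, nfold, Matrix.of_apply, ← Finset.prod_mul_distrib]
  exact (Fintype.prod_sum fun t b => f t (i t) b * g t b (j t)).symm

lemma trace_nfold (f : Fin n → Matrix (Fin 2) (Fin 2) ℂ) :
    (nfold f).trace = ∏ t, (f t).trace :=
  (Fintype.prod_sum fun t b => f t b b).symm

lemma nfold_smul (c : Fin n → ℂ) (f : Fin n → Matrix (Fin 2) (Fin 2) ℂ) :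
    nfold (fun t => c t • f t) = (∏ t, c t) • nfold f := by
  ext i j
  simp [nfold, Finset.prod_mul_distrib]

lemma nfold_one : nfold (fun _ : Fin n => (1 : Matrix (Fin 2) (Fin 2) ℂ)) = 1 := by
  ext i j
  by_cases h : i = j
  · subst h; simp [nfold]
  · obtain ⟨t, ht⟩ := Function.ne_iff.mp h
    rw [Matrix.one_apply_ne h]
    exact Finset.prod_eq_zero (Finset.mem_univ t) (Matrix.one_apply_ne ht)

lemma sum_nfold {α : Type*} [Fintype α] (f : Fin n → α → Matrix (Fin 2) (Fin 2) ℂ) :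
    ∑ a : Fin n → α, nfold (fun t => f t (a t)) = nfold fun t => ∑ b, f t b := by
  ext i j
  simp only [Matrix.sum_apply, nfold, Matrix.of_apply]
  exact (Fintype.prod_sum fun t b => f t b (i t) (j t)).symm

lemma sum_trace_mul_nfold_mul_prod {α : Type*} [Fintype α]
    (ρ : Matrix (Fin n → Fin 2) (Fin n → Fin 2) ℂ) (f : Fin n → α → Matrix (Fin 2) (Fin 2) ℂ)
    (c : Fin n → α → ℂ) :
    ∑ a : Fin n → α, (ρ * nfold fun t => f t (a t)).trace * ∏ t, c t (a t)
      = (ρ * nfold fun t => ∑ b, c t b • f t b).trace := by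
  simp_rw [← sum_nfold, nfold_smul, Matrix.mul_sum, Matrix.trace_sum, Matrix.mul_smul,
    Matrix.trace_smul, smul_eq_mul, mul_comm]

end nfold

theorem Fin.prod_ite_val_lt {M : Type*} [CommMonoid M] {n k : ℕ} (hk : k ≤ n) (c : M) :
    ∏ i : Fin n, (if (i : ℕ) < k then c else 1) = c ^ k := by
  rw [Finset.prod_ite, Finset.prod_const, Finset.prod_const_one, mul_one,
    Fin.card_filter_val_lt, min_eq_right hk]

theorem pauli6_second_moment_bound_general
    (n k : ℕ) (hk : k ≤ n) (P : Fin n → Matrix (Fin 2) (Fin 2) ℂ)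
    (hPk : ∀ i : Fin n, (i : ℕ) < k → P i = sx ∨ P i = sy ∨ P i = sz)
    (hPid : ∀ i : Fin n, k ≤ (i : ℕ) → P i = 1)
    (ρ : Matrix (Fin n → Fin 2) (Fin n → Fin 2) ℂ)
    (hρtr : ρ.trace = 1) :
    (∀ Q : Matrix (Fin 2) (Fin 2) ℂ, (Q = sx ∨ Q = sy ∨ Q = sz) →
      ∑ a : Fin 6,
        (star (ψ6 a) ⬝ᵥ ((3 : ℂ) • Q).mulVec (ψ6 a)) ^ 2 • M6 a
          = (3 : ℂ) • (1 : Matrix (Fin 2) (Fin 2) ℂ)) ∧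
    ∑ a : Fin n → Fin 6,
      (ρ * nfold fun i => M6 (a i)).trace *
        ((nfold P * nfold fun i => Minv (proj (ψ6 (a i)))).trace) ^ 2
      ≤ (3 : ℂ) ^ k := by
  refine ⟨fun _ => sum_sq_expectation_smul_M6, le_of_eq ?_⟩
  have hsite (i : Fin n) : ∑ b : Fin 6, (P i * Minv (proj (ψ6 b))).trace ^ 2 • M6 b
      = (if (i : ℕ) < k then (3 : ℂ) else 1) • 1 := by
    split_ifs with hi
    · exact sum_sq_trace_mul_Minv_smul_M6_of_pauli (hPk i hi)
    · rw [hPid i (not_lt.mp hi), one_smul]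
      exact sum_sq_trace_one_mul_Minv_smul_M6
  simp_rw [nfold_mul, trace_nfold, ← Finset.prod_pow]
  rw [sum_trace_mul_nfold_mul_prod ρ (fun _ => M6) fun i b => (P i * Minv (proj (ψ6 b))).trace ^ 2]
  simp_rw [hsite]
  rw [nfold_smul, nfold_one, Matrix.mul_smul, Matrix.mul_one, Matrix.trace_smul, hρtr,
    smul_eq_mul, mul_one, Fin.prod_ite_val_lt hk]

/-- For the Pauli-6 POVM, $\sum_a M_a ⟨ψ_a|3P|ψ_a⟩^2 = 3I$ for every Pauli
matrix $P$; consequently for a k-local tensor-product Pauli observable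
$O = P_1 ⊗ ⋯ ⊗ P_k ⊗ I^{⊗(n-k)}$, the single-shadow estimator has second
moment at most $3^k$ for every n-qubit density matrix ρ. -/
theorem pauli6_second_moment_bound
    (n k : ℕ) (hk : k ≤ n) (P : Fin n → Matrix (Fin 2) (Fin 2) ℂ)
    (hPk : ∀ i : Fin n, (i : ℕ) < k → P i = sx ∨ P i = sy ∨ P i = sz)
    (hPid : ∀ i : Fin n, k ≤ (i : ℕ) → P i = 1)
    (ρ : Matrix (Fin n → Fin 2) (Fin n → Fin 2) ℂ)
    (hρ : ρ.PosSemidef) (hρtr : ρ.trace = 1) :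
    (∀ Q : Matrix (Fin 2) (Fin 2) ℂ, (Q = sx ∨ Q = sy ∨ Q = sz) →
      ∑ a : Fin 6,
        (star (ψ6 a) ⬝ᵥ ((3 : ℂ) • Q).mulVec (ψ6 a)) ^ 2 • M6 a
          = (3 : ℂ) • (1 : Matrix (Fin 2) (Fin 2) ℂ)) ∧
    ∑ a : Fin n → Fin 6,
      (ρ * nfold fun i => M6 (a i)).trace *
        ((nfold P * nfold fun i => Minv (proj (ψ6 (a i)))).trace) ^ 2
      ≤ (3 : ℂ) ^ k :=
  pauli6_second_moment_bound_general n k hk P hPk hPid ρ hρtr
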